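/- (Capped soft-thresholding of singular values.) Let W ∈ ℝ^{p×m} have singular value decomposition W = Σ_{i=1}^m ω_i a_i b_i' with ω_1 ≥ … ≥ ω_m ≥ 0, and let r ≤ m be a positive integer. Suppose γ* ≥ 0 is minimal such that Σ_{i=1}^m min{1, (ω_i − γ*)_+} ≤ r. Then G* = Σ_{i=1}^m g_i a_i b_i' with g_i = min{1, (ω_i − γ*)_+} is a minimizer of ‖G − W‖_F over the set {G : ‖G‖_* ≤ r, ‖G‖_op ≤ 1}. -/

import Mathlib

open Matrix Real

/-- Vector of singular values of a real matrix. -/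
noncomputable def singVals {p m : ℕ} (A : Matrix (Fin p) (Fin m) ℝ) : Fin m → ℝ :=
  fun i => Real.sqrt ((Matrix.isHermitian_conjTranspose_mul_self A).eigenvalues i)

/-- Operator (spectral) norm: largest singular value. -/
noncomputable def opNorm {p m : ℕ} (A : Matrix (Fin p) (Fin m) ℝ) : ℝ :=
  ⨆ i, singVals A i

/-- Nuclear norm: sum of singular values. -/
noncomputable def nucNorm {p m : ℕ} (A : Matrix (Fin p) (Fin m) ℝ) : ℝ :=
  ∑ i, singVals A i

/-- Frobenius norm. -/
noncomputable def frob {p m : ℕ} (A : Matrix (Fin p) (Fin m) ℝ) : ℝ :=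
  Real.sqrt (∑ i, ∑ j, (A i j) ^ 2)

section aux

variable {n p m q : ℕ}

lemma dotProduct_sum' (w : Fin p → ℝ) (f : Fin q → Fin p → ℝ) :
    w ⬝ᵥ (∑ k, f k) = ∑ k, w ⬝ᵥ f k := by
  simp only [dotProduct, Finset.sum_apply, Finset.mul_sum]
  exact Finset.sum_comm

lemma sum_dotProduct' (w : Fin p → ℝ) (f : Fin q → Fin p → ℝ) :
    (∑ k, f k) ⬝ᵥ w = ∑ k, f k ⬝ᵥ w := by
  rw [dotProduct_comm, dotProduct_sum']
  exact Finset.sum_congr rfl fun k _ => dotProduct_comm _ _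

lemma dotProduct_smul' (c : ℝ) (v w : Fin p → ℝ) : v ⬝ᵥ (c • w) = c * (v ⬝ᵥ w) := by
  simp only [dotProduct, Pi.smul_apply, smul_eq_mul, Finset.mul_sum]
  exact Finset.sum_congr rfl fun i _ => by ring

lemma smul_dotProduct' (c : ℝ) (v w : Fin p → ℝ) : (c • v) ⬝ᵥ w = c * (v ⬝ᵥ w) := by
  simp only [dotProduct, Pi.smul_apply, smul_eq_mul, Finset.mul_sum]
  exact Finset.sum_congr rfl fun i _ => by ring

lemma dot_self_sq (w : Fin p → ℝ) : w ⬝ᵥ w = ∑ i, (w i)^2 := by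
  simp [dotProduct, sq]

/-- Bessel's inequality for an orthogonal family with norms ≤ 1. -/
lemma bessel (x : Fin q → Fin p → ℝ)
    (hx0 : ∀ k l, k ≠ l → x k ⬝ᵥ x l = 0) (hx1 : ∀ k, x k ⬝ᵥ x k ≤ 1)
    (w : Fin p → ℝ) : ∑ k, (x k ⬝ᵥ w) ^ 2 ≤ w ⬝ᵥ w := by
  set c : Fin q → ℝ := fun k => x k ⬝ᵥ w with hc
  have h0 : 0 ≤ (w - ∑ k, c k • x k) ⬝ᵥ (w - ∑ k, c k • x k) := by
    apply Finset.sum_nonneg; intro i _; exact mul_self_nonneg _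
  have hws : w ⬝ᵥ (∑ k, c k • x k) = ∑ k, (c k)^2 := by
    rw [dotProduct_sum']
    refine Finset.sum_congr rfl fun k _ => ?_
    rw [dotProduct_smul', dotProduct_comm]; simp [sq, c]
  have hsw : (∑ k, c k • x k) ⬝ᵥ w = ∑ k, (c k)^2 := by
    rw [dotProduct_comm]; exact hws
  have hss : (∑ k, c k • x k) ⬝ᵥ (∑ k, c k • x k) ≤ ∑ k, (c k)^2 := by
    rw [sum_dotProduct']
    apply Finset.sum_le_sum; intro k _
    rw [smul_dotProduct', dotProduct_sum']
    simp only [dotProduct_smul']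
    rw [Finset.sum_eq_single k]
    · have := hx1 k
      have hck := sq_nonneg (c k)
      calc c k * (c k * (x k ⬝ᵥ x k)) = (c k)^2 * (x k ⬝ᵥ x k) := by ring
        _ ≤ (c k)^2 * 1 := by apply mul_le_mul_of_nonneg_left this hck
        _ = (c k)^2 := by ring
    · intro l _ hl; rw [hx0 k l (Ne.symm hl)]; ring
    · intro h; exact absurd (Finset.mem_univ k) h
  have hexp : (w - ∑ k, c k • x k) ⬝ᵥ (w - ∑ k, c k • x k)
      = w ⬝ᵥ w - 2 * ∑ k, (c k)^2 + (∑ k, c k • x k) ⬝ᵥ (∑ k, c k • x k) := by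
    rw [sub_dotProduct, dotProduct_sub, dotProduct_sub, hws, hsw]; ring
  rw [hexp] at h0
  linarith

/-- Expansion in a square orthonormal family (an orthonormal basis). -/
lemma basis_expand (v : Fin m → Fin m → ℝ)
    (hv : ∀ k l, v k ⬝ᵥ v l = if k = l then 1 else 0) (w : Fin m → ℝ) :
    ∑ k, (v k ⬝ᵥ w) • v k = w := by
  have hVVt : (Matrix.of v) * (Matrix.of v)ᵀ = 1 := by
    ext k l
    simpa [Matrix.mul_apply, Matrix.one_apply, dotProduct] using hv k l
  have hVtV : (Matrix.of v)ᵀ * (Matrix.of v) = 1 := mul_eq_one_comm.mp hVVt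
  have hcol : ∀ j j', ∑ k, v k j * v k j' = if j = j' then (1:ℝ) else 0 := by
    intro j j'
    have := congrFun (congrFun hVtV j) j'
    simpa [Matrix.mul_apply, Matrix.one_apply] using this
  funext j
  simp only [Finset.sum_apply, Pi.smul_apply, smul_eq_mul, dotProduct]
  calc ∑ k, (∑ j', v k j' * w j') * v k j
      = ∑ j', w j' * ∑ k, v k j * v k j' := by
        simp only [Finset.sum_mul, Finset.mul_sum]
        rw [Finset.sum_comm]
        exact Finset.sum_congr rfl fun j' _ => Finset.sum_congr rfl fun k _ => by ring
    _ = w j := by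
        simp only [hcol]
        simp

/-- dot product of combinations of a pairwise-orthogonal family. -/
lemma pairdot (f : Fin m → Fin p → ℝ) (μ : Fin m → ℝ)
    (hf : ∀ k l, f k ⬝ᵥ f l = if k = l then μ l else 0) (c e : Fin m → ℝ) :
    (∑ k, c k • f k) ⬝ᵥ (∑ k, e k • f k) = ∑ k, c k * e k * μ k := by
  rw [sum_dotProduct']
  refine Finset.sum_congr rfl fun k _ => ?_
  rw [smul_dotProduct', dotProduct_sum']
  simp only [dotProduct_smul']
  rw [Finset.mul_sum, Finset.sum_eq_single k]
  · rw [hf k k]; simp; ring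
  · intro l _ hl; rw [hf k l]; simp [Ne.symm hl]
  · intro h; exact absurd (Finset.mem_univ k) h

lemma orthdot (x : Fin m → Fin p → ℝ)
    (hx : ∀ k l, x k ⬝ᵥ x l = if k = l then 1 else 0) (c e : Fin m → ℝ) :
    (∑ i, c i • x i) ⬝ᵥ (∑ i, e i • x i) = ∑ i, c i * e i := by
  have := pairdot x (fun _ => 1) (by intro k l; rw [hx k l]) c e
  simpa using this

/-- Core trace bound via Cauchy–Schwarz. -/
lemma core {ι κ : Type*} [Fintype ι] [Fintype κ] (d : ι → ℝ) (f h : ι → κ → ℝ)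
    (hd : ∀ i, 0 ≤ d i) (hf : ∀ i, ∑ k, (f i k) ^ 2 ≤ 1) (hh : ∀ i, ∑ k, (h i k) ^ 2 ≤ 1) :
    ∑ k, ∑ i, d i * f i k * h i k ≤ ∑ i, d i := by
  rw [Finset.sum_comm]
  apply Finset.sum_le_sum
  intro i _
  have hcs := Finset.sum_mul_sq_le_sq_mul_sq Finset.univ (f i) (h i)
  have h1 : (0:ℝ) ≤ ∑ k, (f i k)^2 := Finset.sum_nonneg fun k _ => sq_nonneg _
  have h2 : (0:ℝ) ≤ ∑ k, (h i k)^2 := Finset.sum_nonneg fun k _ => sq_nonneg _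
  have key : ∑ k, f i k * h i k ≤ 1 := by
    nlinarith [sq_nonneg ((∑ k, f i k * h i k) - 1), hf i, hh i]
  calc ∑ k, d i * f i k * h i k = d i * ∑ k, f i k * h i k := by
        rw [Finset.mul_sum]; exact Finset.sum_congr rfl fun k _ => by ring
    _ ≤ d i * 1 := mul_le_mul_of_nonneg_left key (hd i)
    _ = d i := mul_one _

lemma sumMat_mulVec (d : Fin n → ℝ) (x : Fin n → Fin p → ℝ) (y : Fin n → Fin m → ℝ)
    (w : Fin m → ℝ) :
    (∑ i, d i • Matrix.vecMulVec (x i) (y i)) *ᵥ w = ∑ i, (d i * (y i ⬝ᵥ w)) • x i := by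
  funext j
  simp only [Matrix.mulVec, dotProduct, Matrix.sum_apply, Matrix.smul_apply,
    Matrix.vecMulVec_apply, smul_eq_mul, Finset.sum_apply, Pi.smul_apply,
    Finset.sum_mul, Finset.mul_sum]
  rw [Finset.sum_comm]
  exact Finset.sum_congr rfl fun i _ => Finset.sum_congr rfl fun l _ => by ring

lemma mulVec_sum_smul (G : Matrix (Fin p) (Fin m) ℝ) (c : Fin q → ℝ) (f : Fin q → Fin m → ℝ) :
    G *ᵥ (∑ k, c k • f k) = ∑ k, c k • (G *ᵥ f k) := by
  funext j
  simp only [Matrix.mulVec, Finset.sum_apply, Pi.smul_apply, smul_eq_mul]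
  rw [dotProduct_sum']
  exact Finset.sum_congr rfl fun k _ => by rw [dotProduct_smul']

end aux

section spec

variable {p m : ℕ} (A : Matrix (Fin p) (Fin m) ℝ)

noncomputable def specV : Fin m → Fin m → ℝ :=
  fun k => ⇑((Matrix.isHermitian_conjTranspose_mul_self A).eigenvectorBasis k)

noncomputable def specμ : Fin m → ℝ :=
  (Matrix.isHermitian_conjTranspose_mul_self A).eigenvalues

lemma specV_orth : ∀ k l, specV A k ⬝ᵥ specV A l = if k = l then 1 else 0 := by
  intro k l
  have h := (Matrix.isHermitian_conjTranspose_mul_self A).eigenvectorBasis.orthonormal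
  rw [orthonormal_iff_ite] at h
  have := h k l
  simpa [PiLp.inner_apply, RCLike.inner_apply, conj_trivial, specV, dotProduct, mul_comm] using this

lemma specV_eig (k : Fin m) : (Aᴴ * A) *ᵥ specV A k = specμ A k • specV A k :=
  (Matrix.isHermitian_conjTranspose_mul_self A).mulVec_eigenvectorBasis k

lemma specμ_nonneg (k : Fin m) : 0 ≤ specμ A k :=
  Matrix.eigenvalues_conjTranspose_mul_self_nonneg A k

lemma dot_AtA (x y : Fin m → ℝ) : (A *ᵥ x) ⬝ᵥ (A *ᵥ y) = x ⬝ᵥ ((Aᴴ * A) *ᵥ y) := by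
  have hT : Aᴴ = Aᵀ := by
    ext i j; simp [Matrix.conjTranspose_apply]
  rw [← Matrix.mulVec_mulVec, hT]
  rw [Matrix.dotProduct_mulVec x, Matrix.vecMul_transpose]

lemma specAv (k l : Fin m) :
    (A *ᵥ specV A k) ⬝ᵥ (A *ᵥ specV A l) = if k = l then specμ A l else 0 := by
  rw [dot_AtA, specV_eig, dotProduct_smul', specV_orth]
  split_ifs <;> simp

lemma singVals_eq (k : Fin m) : singVals A k = Real.sqrt (specμ A k) := rfl

lemma nucNorm_eq : nucNorm A = ∑ k, Real.sqrt (specμ A k) := rfl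

lemma singVals_le_opNorm (k : Fin m) : singVals A k ≤ opNorm A :=
  le_ciSup (Set.Finite.bddAbove (Set.finite_range _)) k

end spec

section mainlemmas

variable {n p m q : ℕ}

/-- Nuclear norm of a non-negative combination of orthonormal dyads. -/
lemma nucNorm_rep_le (d : Fin n → ℝ) (x : Fin n → Fin p → ℝ) (y : Fin n → Fin m → ℝ)
    (hd : ∀ i, 0 ≤ d i)
    (hx : ∀ i j, x i ⬝ᵥ x j = if i = j then 1 else 0)
    (hy : ∀ i j, y i ⬝ᵥ y j = if i = j then 1 else 0) :
    nucNorm (∑ i, d i • Matrix.vecMulVec (x i) (y i)) ≤ ∑ i, d i := by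
  classical
  set A := ∑ i, d i • Matrix.vecMulVec (x i) (y i) with hA
  set v := specV A
  set μ := specμ A
  set w : Fin m → Fin p → ℝ := fun k => A *ᵥ v k with hwdef
  have hww : ∀ k l, w k ⬝ᵥ w l = if k = l then μ l else 0 := fun k l => specAv A k l
  set u : Fin m → Fin p → ℝ := fun k => if μ k = 0 then 0 else (Real.sqrt (μ k))⁻¹ • w k
    with hudef
  have hμ : ∀ k, 0 ≤ μ k := specμ_nonneg A
  have hsqrtpos : ∀ k, μ k ≠ 0 → 0 < Real.sqrt (μ k) := fun k h =>
    Real.sqrt_pos.mpr (lt_of_le_of_ne (hμ k) (Ne.symm h))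
  have huw : ∀ k, u k ⬝ᵥ w k = Real.sqrt (μ k) := by
    intro k
    by_cases h : μ k = 0
    · simp [u, h, Real.sqrt_eq_zero', zero_dotProduct]
    · have hpos := hsqrtpos k h
      simp only [u, h, if_false]
      rw [smul_dotProduct']
      rw [show w k ⬝ᵥ w k = μ k by rw [hww k k]; simp]
      rw [show μ k = Real.sqrt (μ k) * Real.sqrt (μ k) from (Real.mul_self_sqrt (hμ k)).symm]
      field_simp
      rw [Real.sqrt_sq hpos.le]
  have hu0 : ∀ k l, k ≠ l → u k ⬝ᵥ u l = 0 := by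
    intro k l hkl
    by_cases h1 : μ k = 0
    · simp [u, h1, zero_dotProduct]
    by_cases h2 : μ l = 0
    · simp [u, h2, dotProduct_zero, h1]
    simp only [u, h1, h2, if_false]
    rw [smul_dotProduct', dotProduct_smul']
    rw [hww k l]
    simp [hkl]
  have hu1 : ∀ k, u k ⬝ᵥ u k ≤ 1 := by
    intro k
    by_cases h : μ k = 0
    · simp [u, h, zero_dotProduct]
    · have hpos := hsqrtpos k h
      simp only [u, h, if_false]
      rw [smul_dotProduct', dotProduct_smul']
      rw [show w k ⬝ᵥ w k = μ k by rw [hww k k]; simp]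
      have hinv : (Real.sqrt (μ k))⁻¹ * Real.sqrt (μ k) = 1 := inv_mul_cancel₀ (ne_of_gt hpos)
      have hms := Real.mul_self_sqrt (hμ k)
      set s := Real.sqrt (μ k) with hs
      rw [← hms]
      rw [show s⁻¹ * (s⁻¹ * (s * s)) = (s⁻¹ * s) * (s⁻¹ * s) from by ring, hinv]
      norm_num
  have hnuc : nucNorm A = ∑ k, u k ⬝ᵥ w k := by
    rw [nucNorm_eq]
    exact Finset.sum_congr rfl fun k _ => (huw k).symm
  rw [hnuc]
  have hwk : ∀ k, w k = ∑ i, (d i * (y i ⬝ᵥ v k)) • x i := by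
    intro k; rw [hwdef]; exact sumMat_mulVec d x y (v k)
  have hterm : ∀ k, u k ⬝ᵥ w k = ∑ i, d i * (x i ⬝ᵥ u k) * (y i ⬝ᵥ v k) := by
    intro k
    rw [hwk k, dotProduct_sum']
    refine Finset.sum_congr rfl fun i _ => ?_
    rw [dotProduct_smul', dotProduct_comm (u k) (x i)]
    ring
  calc ∑ k, u k ⬝ᵥ w k = ∑ k, ∑ i, d i * (x i ⬝ᵥ u k) * (y i ⬝ᵥ v k) :=
        Finset.sum_congr rfl fun k _ => hterm k
    _ ≤ ∑ i, d i := by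
        apply core d (fun i k => x i ⬝ᵥ u k) (fun i k => y i ⬝ᵥ v k) hd
        · intro i
          have : ∀ k, (x i ⬝ᵥ u k)^2 = (u k ⬝ᵥ x i)^2 := fun k => by rw [dotProduct_comm]
          simp only [this]
          have hb := bessel u hu0 hu1 (x i)
          have hxi : x i ⬝ᵥ x i = 1 := by rw [hx i i]; simp
          linarith [hb, hxi.le]
        · intro i
          have : ∀ k, (y i ⬝ᵥ v k)^2 = (v k ⬝ᵥ y i)^2 := fun k => by rw [dotProduct_comm]
          simp only [this]
          have hb := bessel v (fun k l hkl => by rw [specV_orth A k l]; simp [hkl])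
            (fun k => by rw [specV_orth A k k]; simp) (y i)
          have hyi : y i ⬝ᵥ y i = 1 := by rw [hy i i]; simp
          linarith [hb, hyi.le]

end mainlemmas


section mainlemmas2

variable {n p m q : ℕ}

/-- Normalizing a pairwise-orthogonal family. -/
lemma normalize_family (w : Fin m → Fin p → ℝ) (μ : Fin m → ℝ) (hμ : ∀ k, 0 ≤ μ k)
    (hww : ∀ k l, w k ⬝ᵥ w l = if k = l then μ l else 0) :
    ∃ u : Fin m → Fin p → ℝ, (∀ k l, k ≠ l → u k ⬝ᵥ u l = 0) ∧ (∀ k, u k ⬝ᵥ u k ≤ 1) ∧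
      (∀ k, w k = Real.sqrt (μ k) • u k) := by
  classical
  refine ⟨fun k => if μ k = 0 then 0 else (Real.sqrt (μ k))⁻¹ • w k, ?_, ?_, ?_⟩
  · intro k l hkl
    by_cases h1 : μ k = 0
    · simp [h1, zero_dotProduct]
    by_cases h2 : μ l = 0
    · simp [h2, dotProduct_zero, h1]
    simp only [h1, h2, if_false]
    rw [smul_dotProduct', dotProduct_smul', hww k l]
    simp [hkl]
  · intro k
    by_cases h : μ k = 0
    · simp [h, zero_dotProduct]
    · have hpos : 0 < Real.sqrt (μ k) := Real.sqrt_pos.mpr (lt_of_le_of_ne (hμ k) (Ne.symm h))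
      simp only [h, if_false]
      rw [smul_dotProduct', dotProduct_smul']
      rw [show w k ⬝ᵥ w k = μ k by rw [hww k k]; simp]
      have hinv : (Real.sqrt (μ k))⁻¹ * Real.sqrt (μ k) = 1 := inv_mul_cancel₀ (ne_of_gt hpos)
      have hms := Real.mul_self_sqrt (hμ k)
      set s := Real.sqrt (μ k) with hs
      rw [← hms]
      rw [show s⁻¹ * (s⁻¹ * (s * s)) = (s⁻¹ * s) * (s⁻¹ * s) from by ring, hinv]
      norm_num
  · intro k
    by_cases h : μ k = 0
    · have h0 : w k ⬝ᵥ w k = 0 := by rw [hww k k]; simp [h]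
      have hw0 : w k = 0 := dotProduct_self_eq_zero.mp h0
      simp [h, hw0]
    · have hpos : 0 < Real.sqrt (μ k) := Real.sqrt_pos.mpr (lt_of_le_of_ne (hμ k) (Ne.symm h))
      simp only [h, if_false, smul_smul]
      rw [mul_inv_cancel₀ (ne_of_gt hpos), one_smul]

/-- Trace-type bound: sum of absolute diagonal coefficients is at most the nuclear norm. -/
lemma trace_abs_le_nucNorm (G : Matrix (Fin p) (Fin m) ℝ)
    (a : Fin q → Fin p → ℝ) (b : Fin q → Fin m → ℝ)
    (ha : ∀ i j, a i ⬝ᵥ a j = if i = j then 1 else 0)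
    (hb : ∀ i j, b i ⬝ᵥ b j = if i = j then 1 else 0) :
    ∑ i, |a i ⬝ᵥ (G *ᵥ b i)| ≤ nucNorm G := by
  classical
  set v := specV G with hvdef
  set μ := specμ G with hμdef
  have hμ : ∀ k, 0 ≤ μ k := specμ_nonneg G
  have hvorth := specV_orth G
  set w : Fin m → Fin p → ℝ := fun k => G *ᵥ v k with hwdef
  have hww : ∀ k l, w k ⬝ᵥ w l = if k = l then μ l else 0 := fun k l => specAv G k l
  obtain ⟨u, hu0, hu1, hwu⟩ := normalize_family w μ hμ hww
  have hexp : ∀ z, G *ᵥ z = ∑ k, (v k ⬝ᵥ z) • w k := by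
    intro z
    conv_lhs => rw [← basis_expand v hvorth z]
    exact mulVec_sum_smul G _ v
  set c : Fin q → ℝ := fun i => a i ⬝ᵥ (G *ᵥ b i) with hcdef
  set ε : Fin q → ℝ := fun i => if c i < 0 then -1 else 1 with hεdef
  have hεc : ∀ i, ε i * c i = |c i| := by
    intro i
    by_cases h : c i < 0
    · simp only [hεdef, if_pos h]; rw [abs_of_neg h]; ring
    · simp only [hεdef, if_neg h]; rw [abs_of_nonneg (not_lt.mp h)]; ring
  have hε2 : ∀ i, (ε i)^2 = 1 := by
    intro i; by_cases h : c i < 0 <;> simp [hεdef, h]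
  have hform : ∀ i, c i = ∑ k, Real.sqrt (μ k) * (a i ⬝ᵥ u k) * (v k ⬝ᵥ b i) := by
    intro i
    show a i ⬝ᵥ (G *ᵥ b i) = _
    rw [hexp (b i), dotProduct_sum']
    refine Finset.sum_congr rfl fun k _ => ?_
    rw [dotProduct_smul', hwu k, dotProduct_smul']
    ring
  calc ∑ i, |c i| = ∑ i, ∑ k, Real.sqrt (μ k) * (ε i * (a i ⬝ᵥ u k)) * (v k ⬝ᵥ b i) := by
        refine Finset.sum_congr rfl fun i _ => ?_
        rw [← hεc i, hform i, Finset.mul_sum]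
        exact Finset.sum_congr rfl fun k _ => by ring
    _ ≤ ∑ k, Real.sqrt (μ k) := by
        apply core (fun k => Real.sqrt (μ k)) (fun k i => ε i * (a i ⬝ᵥ u k))
          (fun k i => v k ⬝ᵥ b i) (fun k => Real.sqrt_nonneg _)
        · intro k
          have hbes := bessel a (fun i j hij => by rw [ha i j]; simp [hij])
            (fun i => by rw [ha i i]; simp) (u k)
          have huk := hu1 k
          calc ∑ i, (ε i * (a i ⬝ᵥ u k))^2 = ∑ i, (a i ⬝ᵥ u k)^2 := by
                refine Finset.sum_congr rfl fun i _ => ?_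
                rw [mul_pow, hε2 i, one_mul]
            _ ≤ u k ⬝ᵥ u k := hbes
            _ ≤ 1 := huk
        · intro k
          have hbes := bessel b (fun i j hij => by rw [hb i j]; simp [hij])
            (fun i => by rw [hb i i]; simp) (v k)
          calc ∑ i, (v k ⬝ᵥ b i)^2 = ∑ i, (b i ⬝ᵥ v k)^2 := by
                refine Finset.sum_congr rfl fun i _ => by rw [dotProduct_comm]
            _ ≤ v k ⬝ᵥ v k := hbes
            _ = 1 := by rw [hvorth k k]; simp
    _ = nucNorm G := (nucNorm_eq G).symm

/-- Operator norm of a combination of orthonormal dyads with coefficients in `[0,1]`. -/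
lemma opNorm_rep_le_one (hm : 0 < m) (d : Fin n → ℝ) (x : Fin n → Fin p → ℝ)
    (y : Fin n → Fin m → ℝ) (hd0 : ∀ i, 0 ≤ d i) (hd1 : ∀ i, d i ≤ 1)
    (hx : ∀ i j, x i ⬝ᵥ x j = if i = j then 1 else 0)
    (hy : ∀ i j, y i ⬝ᵥ y j = if i = j then 1 else 0) :
    opNorm (∑ i, d i • Matrix.vecMulVec (x i) (y i)) ≤ 1 := by
  haveI : Nonempty (Fin m) := ⟨⟨0, hm⟩⟩
  set A := ∑ i, d i • Matrix.vecMulVec (x i) (y i) with hA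
  apply ciSup_le
  intro k
  rw [show singVals A k = Real.sqrt (specμ A k) from rfl]
  have hdot : (A *ᵥ specV A k) ⬝ᵥ (A *ᵥ specV A k) = specμ A k := by
    rw [specAv A k k]; simp
  have hwk : A *ᵥ specV A k = ∑ i, (d i * (y i ⬝ᵥ specV A k)) • x i :=
    sumMat_mulVec d x y (specV A k)
  have h1 : specμ A k ≤ 1 := by
    rw [← hdot, hwk, orthdot x hx]
    have hbes := bessel y (fun i j hij => by rw [hy i j]; simp [hij])
      (fun i => by rw [hy i i]; simp) (specV A k)
    calc ∑ i, (d i * (y i ⬝ᵥ specV A k)) * (d i * (y i ⬝ᵥ specV A k))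
        ≤ ∑ i, (y i ⬝ᵥ specV A k)^2 := by
          apply Finset.sum_le_sum; intro i _
          have hdd : d i * d i ≤ 1 := by nlinarith [hd0 i, hd1 i]
          calc d i * (y i ⬝ᵥ specV A k) * (d i * (y i ⬝ᵥ specV A k))
              = (d i * d i) * (y i ⬝ᵥ specV A k)^2 := by ring
            _ ≤ 1 * (y i ⬝ᵥ specV A k)^2 := mul_le_mul_of_nonneg_right hdd (sq_nonneg _)
            _ = (y i ⬝ᵥ specV A k)^2 := one_mul _
      _ ≤ specV A k ⬝ᵥ specV A k := by
          have : ∀ i : Fin n, (y i ⬝ᵥ specV A k)^2 = (y i ⬝ᵥ specV A k)^2 := fun _ => rfl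
          exact hbes
      _ = 1 := by rw [specV_orth A k k]; simp
  calc Real.sqrt (specμ A k) ≤ Real.sqrt 1 := Real.sqrt_le_sqrt h1
    _ = 1 := Real.sqrt_one

/-- Unit-vector quadratic form bound from the operator norm. -/
lemma opNorm_dot_le (G : Matrix (Fin p) (Fin m) ℝ) (hop : opNorm G ≤ 1)
    (xx : Fin p → ℝ) (z : Fin m → ℝ) (hxx : xx ⬝ᵥ xx = 1) (hz : z ⬝ᵥ z = 1) :
    |xx ⬝ᵥ (G *ᵥ z)| ≤ 1 := by
  have hμ := specμ_nonneg G
  have hμ1 : ∀ k, specμ G k ≤ 1 := by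
    intro k
    have h1 : Real.sqrt (specμ G k) ≤ 1 := le_trans (singVals_le_opNorm G k) hop
    nlinarith [Real.sq_sqrt (hμ k), Real.sqrt_nonneg (specμ G k)]
  have hexp : G *ᵥ z = ∑ k, (specV G k ⬝ᵥ z) • (G *ᵥ specV G k) := by
    conv_lhs => rw [← basis_expand (specV G) (specV_orth G) z]
    exact mulVec_sum_smul G _ _
  have hGz : (G *ᵥ z) ⬝ᵥ (G *ᵥ z) ≤ 1 := by
    rw [hexp, pairdot (fun k => G *ᵥ specV G k) (specμ G) (specAv G)]
    have hbes := bessel (specV G) (fun k l hkl => by rw [specV_orth G k l]; simp [hkl])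
      (fun k => by rw [specV_orth G k k]; simp) z
    calc ∑ k, (specV G k ⬝ᵥ z) * (specV G k ⬝ᵥ z) * specμ G k
        ≤ ∑ k, (specV G k ⬝ᵥ z)^2 := by
          apply Finset.sum_le_sum; intro k _
          nlinarith [hμ k, hμ1 k, sq_nonneg (specV G k ⬝ᵥ z)]
      _ ≤ z ⬝ᵥ z := hbes
      _ = 1 := hz
  have hCS := Finset.sum_mul_sq_le_sq_mul_sq Finset.univ xx (G *ᵥ z)
  have h1 : xx ⬝ᵥ (G *ᵥ z) = ∑ i, xx i * (G *ᵥ z) i := rfl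
  have h2 : ∑ i, (xx i)^2 = 1 := by rw [← dot_self_sq]; exact hxx
  have h3 : ∑ i, ((G *ᵥ z) i)^2 ≤ 1 := by rw [← dot_self_sq]; exact hGz
  have hsq : (xx ⬝ᵥ (G *ᵥ z))^2 ≤ 1 := by
    rw [h1]
    calc (∑ i, xx i * (G *ᵥ z) i)^2 ≤ (∑ i, (xx i)^2) * ∑ i, ((G *ᵥ z) i)^2 := hCS
      _ ≤ 1 := by rw [h2, one_mul]; exact h3
  rw [abs_le]
  constructor <;> nlinarith [hsq]

/-- Squared Frobenius norm of a combination of orthonormal dyads. -/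
lemma frob_sq_rep (d : Fin n → ℝ) (x : Fin n → Fin p → ℝ) (y : Fin n → Fin m → ℝ)
    (hx : ∀ i j, x i ⬝ᵥ x j = if i = j then 1 else 0)
    (hy : ∀ i j, y i ⬝ᵥ y j = if i = j then 1 else 0) :
    ∑ j, ∑ l, ((∑ i, d i • Matrix.vecMulVec (x i) (y i)) j l)^2 = ∑ i, (d i)^2 := by
  have hcol : ∀ l, (fun j => (∑ i, d i • Matrix.vecMulVec (x i) (y i)) j l)
      = ∑ i, (d i * y i l) • x i := by
    intro l; funext j
    simp only [Matrix.sum_apply, Matrix.smul_apply, Matrix.vecMulVec_apply, smul_eq_mul,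
      Finset.sum_apply, Pi.smul_apply]
    exact Finset.sum_congr rfl fun i _ => by ring
  rw [Finset.sum_comm]
  calc ∑ l, ∑ j, ((∑ i, d i • Matrix.vecMulVec (x i) (y i)) j l)^2
      = ∑ l, ((∑ i, (d i * y i l) • x i) ⬝ᵥ (∑ i, (d i * y i l) • x i)) := by
        refine Finset.sum_congr rfl fun l _ => ?_
        rw [← hcol l, dot_self_sq]
    _ = ∑ l, ∑ i, (d i * y i l) * (d i * y i l) := by
        refine Finset.sum_congr rfl fun l _ => orthdot x hx _ _
    _ = ∑ i, (d i)^2 * (y i ⬝ᵥ y i) := by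
        rw [Finset.sum_comm]
        refine Finset.sum_congr rfl fun i _ => ?_
        rw [dotProduct, Finset.mul_sum]
        exact Finset.sum_congr rfl fun l _ => by ring
    _ = ∑ i, (d i)^2 := by
        refine Finset.sum_congr rfl fun i _ => ?_
        rw [hy i i]; simp

/-- Lower bound of the squared Frobenius norm by diagonal coefficients. -/
lemma frob_lower (M : Matrix (Fin p) (Fin m) ℝ)
    (a : Fin q → Fin p → ℝ) (b : Fin q → Fin m → ℝ)
    (ha : ∀ i j, a i ⬝ᵥ a j = if i = j then 1 else 0)
    (hb : ∀ i j, b i ⬝ᵥ b j = if i = j then 1 else 0) :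
    ∑ i, (a i ⬝ᵥ (M *ᵥ b i))^2 ≤ ∑ j, ∑ l, (M j l)^2 := by
  have step1 : ∀ i, (a i ⬝ᵥ (M *ᵥ b i))^2 ≤ (M *ᵥ b i) ⬝ᵥ (M *ᵥ b i) := by
    intro i
    have hCS := Finset.sum_mul_sq_le_sq_mul_sq Finset.univ (a i) (M *ᵥ b i)
    have h2 : ∑ j, (a i j)^2 = 1 := by
      rw [← dot_self_sq, ha i i]; simp
    have h3 : ∑ j, ((M *ᵥ b i) j)^2 = (M *ᵥ b i) ⬝ᵥ (M *ᵥ b i) := (dot_self_sq _).symm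
    calc (a i ⬝ᵥ (M *ᵥ b i))^2 = (∑ j, a i j * (M *ᵥ b i) j)^2 := rfl
      _ ≤ (∑ j, (a i j)^2) * ∑ j, ((M *ᵥ b i) j)^2 := hCS
      _ = (M *ᵥ b i) ⬝ᵥ (M *ᵥ b i) := by rw [h2, one_mul, h3]
  calc ∑ i, (a i ⬝ᵥ (M *ᵥ b i))^2 ≤ ∑ i, (M *ᵥ b i) ⬝ᵥ (M *ᵥ b i) :=
        Finset.sum_le_sum fun i _ => step1 i
    _ = ∑ i, ∑ j, (b i ⬝ᵥ M j)^2 := by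
        refine Finset.sum_congr rfl fun i _ => ?_
        rw [dot_self_sq]
        refine Finset.sum_congr rfl fun j _ => ?_
        rw [show (M *ᵥ b i) j = M j ⬝ᵥ b i from rfl, dotProduct_comm]
    _ = ∑ j, ∑ i, (b i ⬝ᵥ M j)^2 := Finset.sum_comm
    _ ≤ ∑ j, M j ⬝ᵥ M j := by
        refine Finset.sum_le_sum fun j _ => ?_
        exact bessel b (fun i k hik => by rw [hb i k]; simp [hik])
          (fun i => by rw [hb i i]; simp) (M j)
    _ = ∑ j, ∑ l, (M j l)^2 := Finset.sum_congr rfl fun j _ => dot_self_sq _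

/-- The capped soft-threshold map is 1-Lipschitz in the threshold. -/
lemma cap_lip (x δ : ℝ) (hδ : 0 ≤ δ) : min 1 (max (x + δ) 0) ≤ min 1 (max x 0) + δ := by
  simp only [min_def, max_def]
  split_ifs <;> linarith

/-- KKT-type pointwise inequality for the capped soft-threshold. -/
lemma gram_step (ωi γ t : ℝ) (hω : 0 ≤ ωi) (hγ : 0 ≤ γ) (ht0 : 0 ≤ t) (ht1 : t ≤ 1) :
    γ * (min 1 (max (ωi - γ) 0) - t)
      ≤ (min 1 (max (ωi - γ) 0) - ωi) * (t - min 1 (max (ωi - γ) 0)) := by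
  simp only [min_def, max_def]
  split_ifs <;> nlinarith

end mainlemmas2

/-- The optimality part of the theorem. -/
lemma main3 {p m r : ℕ}
    (ω : Fin m → ℝ) (hωpos : ∀ i, 0 ≤ ω i)
    (a : Fin m → Fin p → ℝ) (b : Fin m → Fin m → ℝ)
    (ha : ∀ i j, a i ⬝ᵥ a j = if i = j then 1 else 0)
    (hb : ∀ i j, b i ⬝ᵥ b j = if i = j then 1 else 0)
    (γ : ℝ) (hγ : 0 ≤ γ) (g : Fin m → ℝ)
    (hgi : ∀ i, g i = min 1 (max (ω i - γ) 0))
    (hsum : ∑ i, min 1 (max (ω i - γ) 0) ≤ (r : ℝ))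
    (hmin : ∀ γ' : ℝ, 0 ≤ γ' → (∑ i, min 1 (max (ω i - γ') 0) ≤ (r : ℝ)) → γ ≤ γ')
    (G : Matrix (Fin p) (Fin m) ℝ) (hGnuc : nucNorm G ≤ (r : ℝ)) (hGop : opNorm G ≤ 1) :
    frob ((∑ i, g i • Matrix.vecMulVec (a i) (b i))
        - ∑ i, ω i • Matrix.vecMulVec (a i) (b i))
      ≤ frob (G - ∑ i, ω i • Matrix.vecMulVec (a i) (b i)) := by
  have hsumg : ∑ i, g i ≤ (r:ℝ) := by
    rw [show ∑ i, g i = ∑ i, min 1 (max (ω i - γ) 0) from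
      Finset.sum_congr rfl fun i _ => hgi i]
    exact hsum
  have hgr : (0:ℝ) < γ → ∑ i, g i = (r:ℝ) := by
    intro hγpos
    by_contra hne
    have hlt : ∑ i, g i < (r:ℝ) := lt_of_le_of_ne hsumg hne
    set s := ∑ i, g i with hs
    set δ := min γ (((r:ℝ) - s)/((m:ℝ)+1)) with hδdef
    have hrs : 0 < (r:ℝ) - s := by linarith
    have hm1 : (0:ℝ) < (m:ℝ) + 1 := by positivity
    have hδpos : 0 < δ := lt_min hγpos (div_pos hrs hm1)
    have hδγ : δ ≤ γ := min_le_left _ _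
    have hδm : δ * ((m:ℝ)+1) ≤ (r:ℝ) - s := by
      rw [← le_div_iff₀ hm1]; exact min_le_right _ _
    have hstep : ∑ i, min 1 (max (ω i - (γ - δ)) 0) ≤ s + (m:ℝ) * δ := by
      calc ∑ i, min 1 (max (ω i - (γ - δ)) 0) ≤ ∑ i, (g i + δ) := by
            apply Finset.sum_le_sum; intro i _
            rw [show ω i - (γ - δ) = (ω i - γ) + δ from by ring, hgi i]
            exact cap_lip _ _ hδpos.le
        _ = s + (m:ℝ) * δ := by
            rw [Finset.sum_add_distrib, Finset.sum_const, Finset.card_univ, Fintype.card_fin,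
              nsmul_eq_mul]
    have hmle : ∑ i, min 1 (max (ω i - (γ - δ)) 0) ≤ (r:ℝ) := by
      have hmm : (m:ℝ) * δ + δ = δ * ((m:ℝ)+1) := by ring
      linarith
    have := hmin (γ - δ) (by linarith) hmle
    linarith
  have hkey : ∀ t : Fin m → ℝ, (∀ i, 0 ≤ t i) → (∀ i, t i ≤ 1) → (∑ i, t i ≤ (r:ℝ)) →
      ∑ i, (g i - ω i)^2 ≤ ∑ i, (t i - ω i)^2 := by
    intro t ht0 ht1 htr
    have hstep : ∀ i, γ * (g i - t i) ≤ (g i - ω i) * (t i - g i) := by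
      intro i
      rw [hgi i]
      exact gram_step (ω i) γ (t i) (hωpos i) hγ (ht0 i) (ht1 i)
    have hγsum : 0 ≤ γ * (∑ i, g i - ∑ i, t i) := by
      rcases eq_or_lt_of_le hγ with h|h
      · rw [← h]; simp
      · have hgr' := hgr h
        apply mul_nonneg h.le; rw [hgr']; linarith
    have hid : ∑ i, (t i - ω i)^2
        = ∑ i, (g i - ω i)^2 + ∑ i, ((t i - g i)^2 + 2*((g i - ω i)*(t i - g i))) := by
      rw [← Finset.sum_add_distrib]
      exact Finset.sum_congr rfl fun i _ => by ring
    have h2 : ∑ i, (γ * (g i - t i)) ≤ ∑ i, ((g i - ω i)*(t i - g i)) :=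
      Finset.sum_le_sum fun i _ => hstep i
    have h4 : 0 ≤ ∑ i, (t i - g i)^2 := Finset.sum_nonneg fun i _ => sq_nonneg _
    have h3 : ∑ i, (γ * (g i - t i)) = γ * (∑ i, g i - ∑ i, t i) := by
      rw [mul_sub, Finset.mul_sum, Finset.mul_sum, ← Finset.sum_sub_distrib]
      exact Finset.sum_congr rfl fun i _ => by ring
    have h5 : ∑ i, ((t i - g i)^2 + 2*((g i - ω i)*(t i - g i)))
        = ∑ i, (t i - g i)^2 + 2 * ∑ i, ((g i - ω i)*(t i - g i)) := by
      rw [Finset.sum_add_distrib, Finset.mul_sum]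
    linarith [hid, h2, h3, h4, h5, hγsum]
  set W := ∑ i, ω i • Matrix.vecMulVec (a i) (b i) with hW
  set c : Fin m → ℝ := fun i => a i ⬝ᵥ (G *ᵥ b i) with hcdef
  have hc1 : ∀ i, |c i| ≤ 1 := fun i => opNorm_dot_le G hGop (a i) (b i)
    (by rw [ha i i]; simp) (by rw [hb i i]; simp)
  have hcr : ∑ i, |c i| ≤ (r:ℝ) := le_trans (trace_abs_le_nucNorm G a b ha hb) hGnuc
  have hWb : ∀ i, W *ᵥ b i = ω i • a i := by
    intro i
    rw [hW, sumMat_mulVec]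
    rw [Finset.sum_eq_single i]
    · rw [hb i i]; simp
    · intro j _ hj; rw [hb j i]; simp [hj]
    · intro h; exact absurd (Finset.mem_univ i) h
  have hdiffdot : ∀ i, a i ⬝ᵥ ((G - W) *ᵥ b i) = c i - ω i := by
    intro i
    rw [Matrix.sub_mulVec, dotProduct_sub, hWb i, dotProduct_smul']
    rw [show a i ⬝ᵥ a i = 1 from by rw [ha i i]; simp]
    rw [mul_one]
  have hlow : ∑ i, (c i - ω i)^2 ≤ ∑ j, ∑ l, ((G - W) j l)^2 := by
    have h := frob_lower (G - W) a b ha hb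
    calc ∑ i, (c i - ω i)^2 = ∑ i, (a i ⬝ᵥ ((G - W) *ᵥ b i))^2 :=
          Finset.sum_congr rfl fun i _ => by rw [hdiffdot i]
      _ ≤ _ := h
  have hup : (∑ i, g i • Matrix.vecMulVec (a i) (b i)) - W
      = ∑ i, (g i - ω i) • Matrix.vecMulVec (a i) (b i) := by
    rw [hW, ← Finset.sum_sub_distrib]
    exact Finset.sum_congr rfl fun i _ => (sub_smul _ _ _).symm
  have hmid : ∀ i, (|c i| - ω i)^2 ≤ (c i - ω i)^2 := by
    intro i
    nlinarith [le_abs_self (c i), hωpos i, sq_abs (c i)]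
  have hopt := hkey (fun i => |c i|) (fun i => abs_nonneg _) hc1 hcr
  rw [hup]
  unfold frob
  apply Real.sqrt_le_sqrt
  have heq := frob_sq_rep (fun i => g i - ω i) a b ha hb
  refine le_trans (le_of_eq heq) ?_
  calc ∑ i, (g i - ω i)^2 ≤ ∑ i, (|c i| - ω i)^2 := hopt
    _ ≤ ∑ i, (c i - ω i)^2 := Finset.sum_le_sum fun i _ => hmid i
    _ ≤ ∑ j, ∑ l, ((G - W) j l)^2 := hlow

/-- Capped soft-thresholding of singular values: if `W = Σ ω_i a_i b_i'` is an
SVD with `ω₁ ≥ … ≥ ω_m ≥ 0`, and `γ* ≥ 0` is minimal with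
`Σ min{1, (ω_i − γ*)₊} ≤ r`, then `G* = Σ min{1, (ω_i − γ*)₊} a_i b_i'` is a
minimizer of `‖G − W‖_F` over `{G : ‖G‖_* ≤ r, ‖G‖_op ≤ 1}` (in particular it
belongs to this set). -/
theorem stmt13 {p m r : ℕ} (hr : 0 < r) (hrm : r ≤ m)
    (ω : Fin m → ℝ) (hωpos : ∀ i, 0 ≤ ω i)
    (hωanti : ∀ i j : Fin m, i ≤ j → ω j ≤ ω i)
    (a : Fin m → Fin p → ℝ) (b : Fin m → Fin m → ℝ)
    (ha : ∀ i j, a i ⬝ᵥ a j = if i = j then 1 else 0)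
    (hb : ∀ i j, b i ⬝ᵥ b j = if i = j then 1 else 0)
    (γ : ℝ) (hγ : 0 ≤ γ)
    (hsum : ∑ i, min 1 (max (ω i - γ) 0) ≤ (r : ℝ))
    (hmin : ∀ γ' : ℝ, 0 ≤ γ' → (∑ i, min 1 (max (ω i - γ') 0) ≤ (r : ℝ)) → γ ≤ γ') :
    nucNorm (∑ i, min 1 (max (ω i - γ) 0) • Matrix.vecMulVec (a i) (b i)) ≤ (r : ℝ)
    ∧ opNorm (∑ i, min 1 (max (ω i - γ) 0) • Matrix.vecMulVec (a i) (b i)) ≤ 1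
    ∧ ∀ G : Matrix (Fin p) (Fin m) ℝ, nucNorm G ≤ (r : ℝ) → opNorm G ≤ 1 →
        frob ((∑ i, min 1 (max (ω i - γ) 0) • Matrix.vecMulVec (a i) (b i))
            - ∑ i, ω i • Matrix.vecMulVec (a i) (b i))
          ≤ frob (G - ∑ i, ω i • Matrix.vecMulVec (a i) (b i)) := by
  have hm : 0 < m := lt_of_lt_of_le hr hrm
  have hg0 : ∀ i : Fin m, (0:ℝ) ≤ min 1 (max (ω i - γ) 0) :=
    fun i => le_min (by norm_num) (le_max_right _ _)
  have hg1 : ∀ i : Fin m, min 1 (max (ω i - γ) 0) ≤ (1:ℝ) := fun i => min_le_left _ _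
  refine ⟨?_, ?_, ?_⟩
  · exact le_trans (nucNorm_rep_le (fun i => min 1 (max (ω i - γ) 0)) a b hg0 ha hb) hsum
  · exact opNorm_rep_le_one hm (fun i => min 1 (max (ω i - γ) 0)) a b hg0 hg1 ha hb
  · intro G h1 h2
    exact main3 ω hωpos a b ha hb γ hγ (fun i => min 1 (max (ω i - γ) 0))
      (fun i => rfl) hsum hmin G h1 h2
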